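/- For every integer n ≥ 2 there exists a constant C_n > 0 such that for all R ∈ (0, 1] and all t ∈ ℝ one has | (2/R²)^{(n−1)/2} · R^{−1} · I_n(R,t) − ∫₀^1 (1−u²)^{(n−1)/2} cos(tRu) du | ≤ C_n · R², where I_n(R,t) := ∫₀^R (cosh R − cosh u)^{(n−1)/2} cos(tu) du. -/
import Mathlib


open Real

/-- `I n R t = ∫₀^R (cosh R − cosh u)^((n−1)/2) cos(tu) du`. -/
noncomputable def selbergI (n : ℕ) (R t : ℝ) : ℝ :=
  ∫ u in (0:ℝ)..R, (Real.cosh R - Real.cosh u) ^ (((n : ℝ) - 1) / 2) * Real.cos (t * u)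


/-- `sinh x ≤ x (1 + x²)` for `0 ≤ x ≤ 1`. -/
lemma sinh_le_aux {x : ℝ} (h0 : 0 ≤ x) (h1 : x ≤ 1) : Real.sinh x ≤ x * (1 + x ^ 2) := by
  have hx : |x| ≤ 1 := by rwa [abs_of_nonneg h0]
  have hx' : |(-x)| ≤ 1 := by rwa [abs_neg]
  have e1 := Real.exp_bound hx (n := 3) (by norm_num)
  have e2 := Real.exp_bound hx' (n := 3) (by norm_num)
  rw [abs_of_nonneg h0] at e1
  rw [abs_neg, abs_of_nonneg h0] at e2
  simp only [Finset.sum_range_succ, Finset.sum_range_zero, Nat.factorial] at e1 e2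
  norm_num at e1 e2
  rw [Real.sinh_eq]
  rw [abs_le] at e1 e2
  nlinarith [e1.2, e2.1, pow_nonneg h0 3]

/-- `cosh x − cosh y = 2 sinh((x+y)/2) sinh((x−y)/2)`. -/
lemma cosh_sub_cosh_aux (x y : ℝ) :
    Real.cosh x - Real.cosh y =
      2 * Real.sinh ((x + y) / 2) * Real.sinh ((x - y) / 2) := by
  have h : Real.cosh ((x + y) / 2 + (x - y) / 2) - Real.cosh ((x + y) / 2 - (x - y) / 2) =
      2 * Real.sinh ((x + y) / 2) * Real.sinh ((x - y) / 2) := by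
    rw [Real.cosh_add, Real.cosh_sub]; ring
  rw [show (x + y) / 2 + (x - y) / 2 = x from by ring,
    show (x + y) / 2 - (x - y) / 2 = y from by ring] at h
  exact h

/-- `(1+s)^m ≤ 1 + m 3^m s` for `0 ≤ s ≤ 2`. -/
lemma pow_one_add_le (m : ℕ) {s : ℝ} (h0 : 0 ≤ s) (h2 : s ≤ 2) :
    (1 + s) ^ m ≤ 1 + (m * 3 ^ m) * s := by
  induction m with
  | zero => simp
  | succ m ih =>
    have h3 : (1:ℝ) ≤ 3 ^ m := one_le_pow₀ (by norm_num)
    have hm : (0:ℝ) ≤ m := Nat.cast_nonneg m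
    have : (1 + s) ^ (m + 1) = (1 + s) ^ m * (1 + s) := by ring
    rw [this]
    have hnn : (0:ℝ) ≤ 1 + s := by linarith
    have hkey := mul_le_mul_of_nonneg_right ih hnn
    have h3n : (0:ℝ) ≤ 3 ^ m := by positivity
    have hMX : (0:ℝ) ≤ (m:ℝ) * 3 ^ m * s := by positivity
    have hh1 : (m:ℝ) * 3 ^ m * s * s ≤ (m:ℝ) * 3 ^ m * s * 2 :=
      mul_le_mul_of_nonneg_left h2 hMX
    have hh2 : s ≤ 3 ^ m * s := by nlinarith
    push_cast
    rw [pow_succ]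
    nlinarith [mul_nonneg h3n h0]

set_option maxHeartbeats 2000000 in
/-- Uniformly in `t`, `(2/R²)^((n−1)/2) R⁻¹ I_n(R,t)` equals
`∫₀¹ (1−u²)^((n−1)/2) cos(tRu) du` up to an error `O_n(R²)`. -/
theorem selbergI_taylor_approx (n : ℕ) (hn : 2 ≤ n) :
    ∃ C : ℝ, 0 < C ∧ ∀ R t : ℝ, 0 < R → R ≤ 1 →
      |(2 / R ^ 2) ^ (((n : ℝ) - 1) / 2) * R⁻¹ * selbergI n R t -
        ∫ u in (0:ℝ)..1, (1 - u ^ 2) ^ (((n : ℝ) - 1) / 2) * Real.cos (t * R * u)|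
        ≤ C * R ^ 2 := by
  have hn2 : (2:ℝ) ≤ (n:ℝ) := by exact_mod_cast hn
  have hn0 : (0:ℝ) < (n:ℝ) := by linarith
  set p : ℝ := ((n : ℝ) - 1) / 2 with hpdef
  have hp0 : 0 ≤ p := by rw [hpdef]; exact div_nonneg (by linarith) (by norm_num)
  refine ⟨4 * n * 3 ^ n, mul_pos (mul_pos (by norm_num) hn0) (by positivity), ?_⟩
  intro R t hR hR1
  -- Step 1: substitution u = R v
  have hsub : (∫ v in (0:ℝ)..1, (Real.cosh R - Real.cosh (R * v)) ^ p * Real.cos (t * (R * v)))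
      = R⁻¹ * selbergI n R t := by
    have h := intervalIntegral.integral_comp_mul_left (a := 0) (b := 1)
      (fun u => (Real.cosh R - Real.cosh u) ^ p * Real.cos (t * u)) (ne_of_gt hR)
    simpa [smul_eq_mul, selbergI] using h
  -- Step 2: pull the constant inside
  have hLHS : (2 / R ^ 2) ^ p * R⁻¹ * selbergI n R t
      = ∫ v in (0:ℝ)..1,
          ((2 / R ^ 2) * (Real.cosh R - Real.cosh (R * v))) ^ p * Real.cos (t * R * v) := by
    rw [mul_assoc, ← hsub, ← intervalIntegral.integral_const_mul]
    apply intervalIntegral.integral_congr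
    intro v hv
    rw [Set.uIcc_of_le (by norm_num : (0:ℝ) ≤ 1)] at hv
    obtain ⟨hv0, hv1⟩ := hv
    have hcc : 0 ≤ Real.cosh R - Real.cosh (R * v) := by
      have h1 : Real.cosh (R * v) ≤ Real.cosh R := by
        rw [Real.cosh_le_cosh, abs_of_nonneg (by positivity), abs_of_nonneg hR.le]
        nlinarith
      linarith
    show (2 / R ^ 2) ^ p * ((Real.cosh R - Real.cosh (R * v)) ^ p * Real.cos (t * (R * v)))
        = ((2 / R ^ 2) * (Real.cosh R - Real.cosh (R * v))) ^ p * Real.cos (t * R * v)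
    rw [Real.mul_rpow (by positivity) hcc]
    ring
  rw [hLHS]
  -- Step 3: combine the two integrals
  have hFc : Continuous fun v : ℝ =>
      ((2 / R ^ 2) * (Real.cosh R - Real.cosh (R * v))) ^ p * Real.cos (t * R * v) := by
    apply Continuous.mul
    · exact (continuous_const.mul (continuous_const.sub
        (Real.continuous_cosh.comp (continuous_const.mul continuous_id)))).rpow_const
        (fun x => Or.inr hp0)
    · exact Real.continuous_cos.comp (continuous_const.mul continuous_id)
  have hGc : Continuous fun v : ℝ => (1 - v ^ 2) ^ p * Real.cos (t * R * v) := by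
    apply Continuous.mul
    · exact (continuous_const.sub (continuous_pow 2)).rpow_const (fun x => Or.inr hp0)
    · exact Real.continuous_cos.comp (continuous_const.mul continuous_id)
  rw [← intervalIntegral.integral_sub (hFc.intervalIntegrable 0 1) (hGc.intervalIntegrable 0 1)]
  -- Step 4: pointwise bound
  rw [← Real.norm_eq_abs]
  have hbound : ∀ v ∈ Set.uIoc (0:ℝ) 1,
      ‖((2 / R ^ 2) * (Real.cosh R - Real.cosh (R * v))) ^ p * Real.cos (t * R * v) -
        (1 - v ^ 2) ^ p * Real.cos (t * R * v)‖ ≤ 4 * n * 3 ^ n * R ^ 2 := by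
    intro v hv
    rw [Set.uIoc_of_le (by norm_num : (0:ℝ) ≤ 1)] at hv
    obtain ⟨hv0, hv1⟩ := hv
    have hv0' : 0 ≤ v := hv0.le
    -- the two sinh bounds
    have ha0 : (0:ℝ) ≤ R * (1 + v) / 2 := by positivity
    have hb0 : (0:ℝ) ≤ R * (1 - v) / 2 := by nlinarith
    have ha1 : R * (1 + v) / 2 ≤ 1 := by nlinarith
    have hb1 : R * (1 - v) / 2 ≤ 1 := by nlinarith
    have hid : Real.cosh R - Real.cosh (R * v)
        = 2 * Real.sinh (R * (1 + v) / 2) * Real.sinh (R * (1 - v) / 2) := by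
      rw [cosh_sub_cosh_aux R (R * v),
        show (R + R * v) / 2 = R * (1 + v) / 2 from by ring,
        show (R - R * v) / 2 = R * (1 - v) / 2 from by ring]
    have hsa : R * (1 + v) / 2 ≤ Real.sinh (R * (1 + v) / 2) := Real.self_le_sinh_iff.mpr ha0
    have hsb : R * (1 - v) / 2 ≤ Real.sinh (R * (1 - v) / 2) := Real.self_le_sinh_iff.mpr hb0
    have hsa0 : 0 ≤ Real.sinh (R * (1 + v) / 2) := le_trans ha0 hsa
    have hsb0 : 0 ≤ Real.sinh (R * (1 - v) / 2) := le_trans hb0 hsb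
    have hua : Real.sinh (R * (1 + v) / 2)
        ≤ (R * (1 + v) / 2) * (1 + (R * (1 + v) / 2) ^ 2) := sinh_le_aux ha0 ha1
    have hub : Real.sinh (R * (1 - v) / 2)
        ≤ (R * (1 - v) / 2) * (1 + (R * (1 - v) / 2) ^ 2) := sinh_le_aux hb0 hb1
    -- lower bound
    have hlow : R ^ 2 * (1 - v ^ 2) / 2 ≤ Real.cosh R - Real.cosh (R * v) := by
      rw [hid]
      have hprod : (R * (1 + v) / 2) * (R * (1 - v) / 2)
          ≤ Real.sinh (R * (1 + v) / 2) * Real.sinh (R * (1 - v) / 2) :=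
        mul_le_mul hsa hsb hb0 hsa0
      nlinarith [hprod]
    -- upper bound
    have hup : Real.cosh R - Real.cosh (R * v) ≤ R ^ 2 * (1 - v ^ 2) / 2 * (1 + 2 * R ^ 2) := by
      rw [hid]
      have hprod : Real.sinh (R * (1 + v) / 2) * Real.sinh (R * (1 - v) / 2)
          ≤ ((R * (1 + v) / 2) * (1 + (R * (1 + v) / 2) ^ 2)) *
            ((R * (1 - v) / 2) * (1 + (R * (1 - v) / 2) ^ 2)) :=
        mul_le_mul hua hub hsb0 (by positivity)
      have hR2 : R ^ 2 ≤ 1 := by nlinarith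
      have hv2 : v ^ 2 ≤ 1 := by nlinarith
      have e2 : (R * (1 + v) / 2) ^ 2 * (R * (1 - v) / 2) ^ 2
          = R ^ 4 * (1 - v ^ 2) ^ 2 / 16 := by ring
      have h4 : R ^ 4 ≤ R ^ 2 := by nlinarith [sq_nonneg R]
      have h5 : (1 - v ^ 2) ^ 2 ≤ 1 := by nlinarith [sq_nonneg (1 - v ^ 2)]
      have h6 : R ^ 4 * (1 - v ^ 2) ^ 2 ≤ R ^ 2 := by
        nlinarith [mul_le_mul_of_nonneg_left h5 (by positivity : (0:ℝ) ≤ R ^ 4)]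
      have hs1 : (R * (1 + v) / 2) ^ 2 + (R * (1 - v) / 2) ^ 2 +
          (R * (1 + v) / 2) ^ 2 * (R * (1 - v) / 2) ^ 2 ≤ 2 * R ^ 2 := by
        rw [e2]
        nlinarith [mul_nonneg (sq_nonneg R) (sq_nonneg v)]
      have hc : (0:ℝ) ≤ R ^ 2 * (1 - v ^ 2) / 2 := by nlinarith
      calc 2 * Real.sinh (R * (1 + v) / 2) * Real.sinh (R * (1 - v) / 2)
          = 2 * (Real.sinh (R * (1 + v) / 2) * Real.sinh (R * (1 - v) / 2)) := by ring
        _ ≤ 2 * (((R * (1 + v) / 2) * (1 + (R * (1 + v) / 2) ^ 2)) *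
              ((R * (1 - v) / 2) * (1 + (R * (1 - v) / 2) ^ 2))) := by linarith [hprod]
        _ = R ^ 2 * (1 - v ^ 2) / 2 * (1 + ((R * (1 + v) / 2) ^ 2 + (R * (1 - v) / 2) ^ 2 +
              (R * (1 + v) / 2) ^ 2 * (R * (1 - v) / 2) ^ 2)) := by ring
        _ ≤ R ^ 2 * (1 - v ^ 2) / 2 * (1 + 2 * R ^ 2) := by
            apply mul_le_mul_of_nonneg_left _ hc
            linarith [hs1]
    -- pass to f, g
    have hg0 : (0:ℝ) ≤ 1 - v ^ 2 := by nlinarith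
    have hg1 : (1:ℝ) - v ^ 2 ≤ 1 := by nlinarith
    have hT : (0:ℝ) < 2 / R ^ 2 := by positivity
    have hfg : 1 - v ^ 2 ≤ (2 / R ^ 2) * (Real.cosh R - Real.cosh (R * v)) := by
      have h := mul_le_mul_of_nonneg_left hlow hT.le
      have he : (2 / R ^ 2) * (R ^ 2 * (1 - v ^ 2) / 2) = 1 - v ^ 2 := by
        field_simp
      linarith [he ▸ h]
    have hfu : (2 / R ^ 2) * (Real.cosh R - Real.cosh (R * v))
        ≤ (1 - v ^ 2) * (1 + 2 * R ^ 2) := by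
      have h := mul_le_mul_of_nonneg_left hup hT.le
      have he : (2 / R ^ 2) * (R ^ 2 * (1 - v ^ 2) / 2 * (1 + 2 * R ^ 2))
          = (1 - v ^ 2) * (1 + 2 * R ^ 2) := by field_simp
      linarith [he ▸ h]
    have hf0 : 0 ≤ (2 / R ^ 2) * (Real.cosh R - Real.cosh (R * v)) := le_trans hg0 hfg
    -- rpow inequalities
    have r1 : (1 - v ^ 2) ^ p ≤ ((2 / R ^ 2) * (Real.cosh R - Real.cosh (R * v))) ^ p :=
      Real.rpow_le_rpow hg0 hfg hp0
    have r2 : ((2 / R ^ 2) * (Real.cosh R - Real.cosh (R * v))) ^ p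
        ≤ (1 - v ^ 2) ^ p * (1 + 2 * R ^ 2) ^ p := by
      rw [← Real.mul_rpow hg0 (by positivity)]
      exact Real.rpow_le_rpow hf0 hfu hp0
    have r4 : (1 - v ^ 2) ^ p ≤ 1 := Real.rpow_le_one hg0 hg1 hp0
    have r5 : (1:ℝ) ≤ (1 + 2 * R ^ 2) ^ p := Real.one_le_rpow (by nlinarith) hp0
    have hcast : ((n - 1 : ℕ) : ℝ) = (n : ℝ) - 1 := by
      have h1 : 1 ≤ n := by omega
      push_cast [h1]
      ring
    have r6 : (1 + 2 * R ^ 2) ^ p ≤ (1 + 2 * R ^ 2) ^ (n - 1 : ℕ) := by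
      rw [← Real.rpow_natCast (1 + 2 * R ^ 2) (n - 1), hcast]
      exact Real.rpow_le_rpow_of_exponent_le (by nlinarith) (by rw [hpdef]; linarith)
    have r8 : (1 + 2 * R ^ 2) ^ (n - 1 : ℕ)
        ≤ 1 + ((n - 1 : ℕ) * 3 ^ (n - 1 : ℕ)) * (2 * R ^ 2) :=
      pow_one_add_le (n - 1) (by positivity) (by nlinarith)
    have hA : ((n - 1 : ℕ) : ℝ) ≤ (n : ℝ) := by
      rw [hcast]; linarith
    have hB : (3:ℝ) ^ (n - 1 : ℕ) ≤ 3 ^ n := pow_le_pow_right₀ (by norm_num) (Nat.sub_le n 1)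
    have hlast : ((n - 1 : ℕ) : ℝ) * 3 ^ (n - 1 : ℕ) * (2 * R ^ 2) ≤ 4 * n * 3 ^ n * R ^ 2 := by
      have h1 : ((n - 1 : ℕ) : ℝ) * 3 ^ (n - 1 : ℕ) * (2 * R ^ 2)
          ≤ (n : ℝ) * 3 ^ n * (2 * R ^ 2) := by
        gcongr
      nlinarith [mul_nonneg (mul_nonneg hn0.le (by positivity : (0:ℝ) ≤ (3:ℝ) ^ n))
        (sq_nonneg R)]
    have key : ((2 / R ^ 2) * (Real.cosh R - Real.cosh (R * v))) ^ p - (1 - v ^ 2) ^ p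
        ≤ 4 * n * 3 ^ n * R ^ 2 := by
      have hgp0 : 0 ≤ (1 - v ^ 2) ^ p := Real.rpow_nonneg hg0 p
      have hfac : 0 ≤ (1 + 2 * R ^ 2) ^ p - 1 := by linarith
      have step2 : (1 - v ^ 2) ^ p * ((1 + 2 * R ^ 2) ^ p - 1)
          ≤ 1 * ((1 + 2 * R ^ 2) ^ p - 1) := mul_le_mul_of_nonneg_right r4 hfac
      nlinarith [r2, step2, r6, r8, hlast]
    -- conclude
    rw [Real.norm_eq_abs, ← sub_mul, abs_mul]
    have hc1 : |Real.cos (t * R * v)| ≤ 1 := Real.abs_cos_le_one _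
    have hnn : 0 ≤ ((2 / R ^ 2) * (Real.cosh R - Real.cosh (R * v))) ^ p - (1 - v ^ 2) ^ p := by
      linarith
    rw [abs_of_nonneg hnn]
    calc (((2 / R ^ 2) * (Real.cosh R - Real.cosh (R * v))) ^ p - (1 - v ^ 2) ^ p) *
          |Real.cos (t * R * v)|
        ≤ (4 * n * 3 ^ n * R ^ 2) * 1 :=
          mul_le_mul key hc1 (abs_nonneg _) (by positivity)
      _ = 4 * n * 3 ^ n * R ^ 2 := by ring
  calc ‖∫ v in (0:ℝ)..1,
        (((2 / R ^ 2) * (Real.cosh R - Real.cosh (R * v))) ^ p * Real.cos (t * R * v) -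
          (1 - v ^ 2) ^ p * Real.cos (t * R * v))‖
      ≤ 4 * n * 3 ^ n * R ^ 2 * |1 - 0| :=
        intervalIntegral.norm_integral_le_of_norm_le_const hbound
    _ = 4 * n * 3 ^ n * R ^ 2 := by norm_num
    _ ≤ 4 * n * 3 ^ n * R ^ 2 := le_refl _
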